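/- arXiv:1904.01338 — 4 statements merged into one kernel-verified Lean document; each statement's English description precedes it below -/
import Mathlib

section
/- Let γ₀ be the unique real root greater than 3/2 of the equation 2√2·√(γ-1) = 2 + (γ-3/2)². Then x_γ^+ = -2 - (γ-3/2)² + 2√2·√(γ-1) is positive if and only if 3/2 < γ < γ₀, and x_γ^+ ≤ 0 for γ ≥ γ₀ (with γ > 1). Explicitly, γ₀ = 3/2 + c - 4/(3c) where c = (4 + 4√31/3^{3/2})^{1/3}, and γ₀ ≈ 2.8646556. -/
set_option maxHeartbeats 1600000 in
/-- Let `γ₀ = 3/2 + c - 4/(3c)` with `c = (4 + 4√31/3^{3/2})^{1/3}`. Then `γ₀ > 3/2`,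
`γ₀` is the unique root greater than `3/2` of `2√2·√(γ-1) = 2 + (γ-3/2)²`, and for `γ > 1`,
`x_γ⁺ = -2 - (γ-3/2)² + 2√2√(γ-1)` is positive iff `3/2 < γ < γ₀`, with `x_γ⁺ ≤ 0` for `γ ≥ γ₀`. -/
theorem stmt5 :
    ∀ c γ₀ : ℝ, c = (4 + 4 * Real.sqrt 31 / (3 : ℝ) ^ ((3 : ℝ)/2)) ^ ((1 : ℝ)/3) →
      γ₀ = 3/2 + c - 4 / (3 * c) →
    (3/2 < γ₀ ∧
     2 * Real.sqrt 2 * Real.sqrt (γ₀ - 1) = 2 + (γ₀ - 3/2)^2 ∧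
     (∀ γ : ℝ, 3/2 < γ → 2 * Real.sqrt 2 * Real.sqrt (γ - 1) = 2 + (γ - 3/2)^2 → γ = γ₀) ∧
     (∀ γ : ℝ, 1 < γ →
        (0 < -2 - (γ - 3/2)^2 + 2 * Real.sqrt 2 * Real.sqrt (γ - 1) ↔ 3/2 < γ ∧ γ < γ₀)) ∧
     (∀ γ : ℝ, 1 < γ → γ₀ ≤ γ →
        -2 - (γ - 3/2)^2 + 2 * Real.sqrt 2 * Real.sqrt (γ - 1) ≤ 0)) := by
  intro c γ₀ hc hγ₀
  have h31 : Real.sqrt 31 ^ 2 = 31 := Real.sq_sqrt (by norm_num)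
  have hs : (0:ℝ) < Real.sqrt 31 := Real.sqrt_pos.mpr (by norm_num)
  have hb : (0:ℝ) < (3:ℝ) ^ ((3:ℝ)/2) := Real.rpow_pos_of_pos (by norm_num) _
  have hb2 : ((3:ℝ) ^ ((3:ℝ)/2)) ^ 2 = 27 := by
    rw [← Real.rpow_natCast ((3:ℝ) ^ ((3:ℝ)/2)) 2, ← Real.rpow_mul (by norm_num : (0:ℝ) ≤ 3)]
    norm_num
  have ha : (0:ℝ) < 4 + 4 * Real.sqrt 31 / (3:ℝ) ^ ((3:ℝ)/2) := by positivity
  have hcpos : 0 < c := by rw [hc]; exact Real.rpow_pos_of_pos ha _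
  have hc3 : c ^ 3 = 4 + 4 * Real.sqrt 31 / (3:ℝ) ^ ((3:ℝ)/2) := by
    rw [hc, ← Real.rpow_natCast _ 3, ← Real.rpow_mul ha.le]; norm_num
  have hc6 : c ^ 6 - 8 * c ^ 3 = 64 / 27 := by
    have h1 : c ^ 6 = (c ^ 3) ^ 2 := by ring
    rw [h1, hc3]
    field_simp
    nlinarith [h31, hb2, hb, hs]
  set t₀ : ℝ := γ₀ - 3/2 with ht₀def
  clear_value t₀
  have ht₀ : t₀ = c - 4 / (3 * c) := by rw [ht₀def, hγ₀]; ring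
  have hcube : t₀ ^ 3 + 4 * t₀ - 8 = 0 := by
    rw [ht₀]
    field_simp
    nlinarith [hc6, hcpos, pow_pos hcpos 3]
  have hc34 : (4:ℝ) ≤ c ^ 3 := by rw [hc3]; nlinarith [hs, hb]
  have ht₀pos : 0 < t₀ := by
    rw [ht₀]
    have h2 : 4 < 3 * c ^ 2 := by nlinarith [hcpos, mul_pos hcpos hcpos]
    rw [sub_pos, div_lt_iff₀ (by positivity)]
    nlinarith
  -- basic facts about A = 2√2√(γ-1)
  have hA : ∀ γ : ℝ, 1 ≤ γ →
      0 ≤ 2 * Real.sqrt 2 * Real.sqrt (γ - 1) ∧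
      (2 * Real.sqrt 2 * Real.sqrt (γ - 1)) ^ 2 = 8 * (γ - 1) := by
    intro γ hγ
    have h2 : Real.sqrt 2 ^ 2 = 2 := Real.sq_sqrt (by norm_num)
    have hg : Real.sqrt (γ - 1) ^ 2 = γ - 1 := Real.sq_sqrt (by linarith)
    constructor
    · positivity
    · nlinarith [h2, hg]
  refine ⟨by linarith, ?_, ?_, ?_, ?_⟩
  · -- equation at γ₀
    have hγ₀1 : (1:ℝ) ≤ γ₀ := by linarith
    obtain ⟨hA0, hA2⟩ := hA γ₀ hγ₀1
    have hB0 : (0:ℝ) ≤ 2 + t₀ ^ 2 := by positivity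
    have hsq : (2 * Real.sqrt 2 * Real.sqrt (γ₀ - 1)) ^ 2 = (2 + t₀ ^ 2) ^ 2 := by
      rw [hA2]
      linear_combination (-t₀) * hcube - 8 * ht₀def
    have h1 : Real.sqrt ((2 * Real.sqrt 2 * Real.sqrt (γ₀ - 1)) ^ 2)
        = Real.sqrt ((2 + t₀ ^ 2) ^ 2) := by rw [hsq]
    rw [Real.sqrt_sq hA0, Real.sqrt_sq hB0] at h1
    exact h1
  · -- uniqueness
    intro γ hγ heq
    have hγ1 : (1:ℝ) ≤ γ := by linarith
    obtain ⟨hA0, hA2⟩ := hA γ hγ1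
    set t : ℝ := γ - 3/2 with htdef
    clear_value t
    have htpos : 0 < t := by rw [htdef]; linarith
    have hsq : 8 * (γ - 1) = (2 + t ^ 2) ^ 2 := by rw [← hA2, heq]
    have hprod : t * (t ^ 3 + 4 * t - 8) = 0 := by
      linear_combination -hsq - 8 * htdef
    have ht3 : t ^ 3 + 4 * t - 8 = 0 := by
      rcases mul_eq_zero.mp hprod with h | h
      · exact absurd h (ne_of_gt htpos)
      · exact h
    have htt : t = t₀ := by
      nlinarith [hcube, ht3, htpos, ht₀pos, mul_pos htpos ht₀pos,
        sq_nonneg t, sq_nonneg t₀, sq_nonneg (t - t₀), sq_nonneg (t + t₀)]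
    rw [htdef, ht₀def] at htt
    linarith
  · -- iff
    intro γ hγ
    have hγ1 : (1:ℝ) ≤ γ := hγ.le
    obtain ⟨hA0, hA2⟩ := hA γ hγ1
    set A := 2 * Real.sqrt 2 * Real.sqrt (γ - 1) with hAdef
    clear_value A
    set t : ℝ := γ - 3/2 with htdef
    clear_value t
    have hB : (0:ℝ) < 2 + t ^ 2 := by positivity
    constructor
    · intro hpos
      have hAB : 2 + t ^ 2 < A := by linarith
      have hsq : (2 + t ^ 2) ^ 2 < 8 * (γ - 1) := by nlinarith [hAB, hA0, hB, hA2]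
      have hprod : t * (t ^ 3 + 4 * t - 8) < 0 := by nlinarith [hsq, htdef, sq_nonneg t]
      have htpos : 0 < t := by
        by_contra h
        push_neg at h
        have h1 : t ^ 3 + 4 * t - 8 < 0 := by nlinarith
        nlinarith [mul_nonneg (neg_nonneg.2 h) (neg_nonneg.2 h1.le)]
      have h2 : t ^ 3 + 4 * t - 8 < 0 := by
        rcases lt_or_ge (t ^ 3 + 4 * t - 8) 0 with h | h
        · exact h
        · nlinarith [mul_nonneg htpos.le h]
      have htlt : t < t₀ := by
        nlinarith [hcube, h2, htpos, ht₀pos, mul_pos htpos ht₀pos, sq_nonneg t, sq_nonneg t₀]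
      constructor
      · rw [htdef] at htpos; linarith
      · rw [htdef] at htlt; rw [ht₀def] at htlt; linarith
    · rintro ⟨h1, h2⟩
      have htpos : 0 < t := by rw [htdef]; linarith
      have htlt : t < t₀ := by rw [htdef, ht₀def]; linarith
      have hg : t ^ 3 + 4 * t - 8 < 0 := by
        nlinarith [hcube, htpos, ht₀pos, mul_pos htpos ht₀pos, sq_nonneg t, sq_nonneg t₀]
      have hsq : (2 + t ^ 2) ^ 2 < 8 * (γ - 1) := by
        nlinarith [mul_pos htpos (by linarith : (0:ℝ) < 8 - t ^ 3 - 4 * t), htdef]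
      have hAB : 2 + t ^ 2 < A := by nlinarith [hA2, hA0, hB, hsq]
      linarith
  · -- γ ≥ γ₀
    intro γ hγ hge
    have hγ1 : (1:ℝ) ≤ γ := hγ.le
    obtain ⟨hA0, hA2⟩ := hA γ hγ1
    set A := 2 * Real.sqrt 2 * Real.sqrt (γ - 1) with hAdef
    clear_value A
    set t : ℝ := γ - 3/2 with htdef
    clear_value t
    have htge : t₀ ≤ t := by rw [htdef, ht₀def]; linarith
    have htpos : 0 < t := lt_of_lt_of_le ht₀pos htge
    have hg : 0 ≤ t ^ 3 + 4 * t - 8 := by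
      nlinarith [hcube, htge, htpos, ht₀pos, mul_pos htpos ht₀pos, sq_nonneg t, sq_nonneg t₀]
    have hsq : 8 * (γ - 1) ≤ (2 + t ^ 2) ^ 2 := by
      nlinarith [mul_nonneg htpos.le hg, htdef]
    have hAB : A ≤ 2 + t ^ 2 := by nlinarith [hA2, hA0, hsq, sq_nonneg t]
    linarith
end

section
/- For real γ with 3/2 ≤ γ ≤ γ₀ (where γ₀ is the root described above, so that x_γ^+ = -2 - (γ-3/2)² + 2√2√(γ-1) ≥ 0), the minimum over x ≥ 0 of F(x) = x + 2 + 8(γ-1)/(x + 2 + (γ-3/2)²) is attained at x = x_γ^+ and equals 4√2·√(γ-1) - (γ - 3/2)². -/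
private lemma cubic_aux (u : ℝ) (hu0 : 0 ≤ u)
    (hule : u ≤ (4 + 4 * Real.sqrt 31 / (3 : ℝ) ^ ((3 : ℝ)/2)) ^ ((1 : ℝ)/3)
      - 4 / (3 * (4 + 4 * Real.sqrt 31 / (3 : ℝ) ^ ((3 : ℝ)/2)) ^ ((1 : ℝ)/3))) :
    u^3 + 4*u ≤ 8 := by
  set A : ℝ := 4 + 4 * Real.sqrt 31 / (3 : ℝ) ^ ((3 : ℝ)/2) with hA
  have hB : (0:ℝ) < (3 : ℝ) ^ ((3 : ℝ)/2) := Real.rpow_pos_of_pos (by norm_num) _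
  have hB2 : ((3 : ℝ) ^ ((3 : ℝ)/2))^2 = 27 := by
    rw [← Real.rpow_natCast ((3:ℝ) ^ ((3:ℝ)/2)) 2, ← Real.rpow_mul (by norm_num)]
    norm_num
  have hsq31 : Real.sqrt 31 ^ 2 = 31 := Real.sq_sqrt (by norm_num)
  have hApos : (0:ℝ) < A := by
    have h1 : 0 ≤ 4 * Real.sqrt 31 / (3 : ℝ) ^ ((3 : ℝ)/2) := by positivity
    rw [hA]; linarith
  have hA2 : A^2 = 8*A + 64/27 := by
    rw [hA]; field_simp; nlinarith [hB2, hsq31, hB]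
  set c : ℝ := A ^ ((1:ℝ)/3) with hc
  have hcpos : (0:ℝ) < c := Real.rpow_pos_of_pos hApos _
  have hc3 : c^3 = A := by
    rw [hc, ← Real.rpow_natCast (A ^ ((1:ℝ)/3)) 3, ← Real.rpow_mul hApos.le]
    norm_num
  set v : ℝ := c - 4/(3*c) with hv
  have hcube0 : v^3 + 4*v = 8 := by
    have hc6 : c^6 = 8*c^3 + 64/27 := by
      have h : c^6 = (c^3)^2 := by ring
      rw [h, hc3, hA2]
    rw [hv]
    field_simp
    nlinarith [hc6, hcpos]
  have key : 0 ≤ (v - u) * (v^2 + u*v + u^2 + 4) :=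
    mul_nonneg (by linarith) (by nlinarith [sq_nonneg (u+v), sq_nonneg (u-v)])
  nlinarith [key, hcube0]

/-- For `3/2 ≤ γ ≤ γ₀` (so that `x_γ⁺ ≥ 0`), the minimum over `x ≥ 0` of
`F(x) = x + 2 + 8(γ-1)/(x + 2 + (γ-3/2)²)` is attained at `x = x_γ⁺` and equals
`4√2·√(γ-1) - (γ-3/2)²`. -/
theorem stmt6 (γ γ₀ : ℝ)
    (hγ₀ : γ₀ = 3/2 + (4 + 4 * Real.sqrt 31 / (3 : ℝ) ^ ((3 : ℝ)/2)) ^ ((1 : ℝ)/3)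
      - 4 / (3 * (4 + 4 * Real.sqrt 31 / (3 : ℝ) ^ ((3 : ℝ)/2)) ^ ((1 : ℝ)/3)))
    (h1 : 3/2 ≤ γ) (h2 : γ ≤ γ₀)
    (xp : ℝ) (hxp : xp = -2 - (γ - 3/2)^2 + 2 * Real.sqrt 2 * Real.sqrt (γ - 1)) :
    0 ≤ xp ∧
    (∀ x : ℝ, 0 ≤ x →
      xp + 2 + 8 * (γ - 1) / (xp + 2 + (γ - 3/2)^2) ≤
        x + 2 + 8 * (γ - 1) / (x + 2 + (γ - 3/2)^2)) ∧
    xp + 2 + 8 * (γ - 1) / (xp + 2 + (γ - 3/2)^2) =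
      4 * Real.sqrt 2 * Real.sqrt (γ - 1) - (γ - 3/2)^2 := by
  have hcube : (γ - 3/2)^3 + 4*(γ - 3/2) ≤ 8 :=
    cubic_aux (γ - 3/2) (by linarith) (by rw [hγ₀] at h2; linarith)
  clear hγ₀ h2
  set u : ℝ := γ - 3/2 with hu
  have hu0 : 0 ≤ u := by rw [hu]; linarith
  set s : ℝ := Real.sqrt 2 * Real.sqrt (γ - 1) with hs
  have hs2 : s^2 = 2*(γ-1) := by
    rw [hs, mul_pow, Real.sq_sqrt (by norm_num : (0:ℝ) ≤ 2),
      Real.sq_sqrt (by linarith : (0:ℝ) ≤ γ - 1)]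
  have hsnn : 0 ≤ s := by positivity
  have hs2u : s^2 = 2*u + 1 := by rw [hs2, hu]; ring
  have h2s : 2 + u^2 ≤ 2*s := by
    nlinarith [hcube, hs2u, hsnn, hu0, sq_nonneg (2*s - (2+u^2)), sq_nonneg u]
  have hspos : 0 < s := by nlinarith
  have hxpd : xp + 2 + u^2 = 2*s := by rw [hxp]; ring
  have hxp0 : 0 ≤ xp := by nlinarith
  have h8 : 8*(γ-1) = 4*s^2 := by rw [hs2]; ring
  have hFxp : xp + 2 + 8 * (γ - 1) / (xp + 2 + u^2) = 4*s - u^2 := by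
    rw [hxpd, h8]
    have hx' : xp = 2*s - 2 - u^2 := by linarith
    rw [hx']
    field_simp
    ring
  refine ⟨hxp0, ?_, by rw [hFxp, hs]; ring⟩
  intro x hx
  rw [hFxp, h8]
  have ht : 0 < x + 2 + u^2 := by positivity
  have key : x + 2 + 4*s^2/(x + 2 + u^2) - (4*s - u^2)
      = (x + 2 + u^2 - 2*s)^2 / (x + 2 + u^2) := by
    field_simp
    ring
  nlinarith [div_nonneg (sq_nonneg (x + 2 + u^2 - 2*s)) ht.le, key]
end

section
/- For each integer ν ≥ 1, the function P_{ν−1}(x) = (1−x²)^{−1} (d/dx)^{ν−1} (1−x²)^ν is a polynomial of degree ν−1 and satisfies the Gegenbauer/5-dimensional Legendre differential equation (1−x²)P'' − 4x P' + (ν(ν+1) − 2)P = 0 on (−1, 1). -/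
open Polynomial

lemma natDeg_deriv (p : ℝ[X]) (hp : p.natDegree ≠ 0) :
    (derivative p).natDegree = p.natDegree - 1 := by
  refine le_antisymm (natDegree_derivative_le p) (le_natDegree_of_ne_zero ?_)
  rw [coeff_derivative]
  have h1 : p.natDegree - 1 + 1 = p.natDegree := Nat.succ_pred_eq_of_pos (Nat.pos_of_ne_zero hp)
  rw [h1]
  have h0 : p ≠ 0 := fun h => hp (by simp [h])
  have hc : p.coeff p.natDegree ≠ 0 := mt leadingCoeff_eq_zero.mp h0
  have : ((p.natDegree - 1 : ℕ) : ℝ) + 1 ≠ 0 := by positivity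
  exact mul_ne_zero hc this

-- base Pearson identity
lemma baseId (ν : ℕ) (hν : 1 ≤ ν) :
    (1 - X^2) * derivative ((1 - X^2 : ℝ[X])^ν) + 2*(ν : ℝ[X]) * X * (1 - X^2)^ν = 0 := by
  rw [derivative_pow]
  have h : (1 - X^2 : ℝ[X])^ν = (1 - X^2)^(ν-1) * (1 - X^2) := by
    rw [← pow_succ, Nat.sub_add_cancel hν]
  rw [h]
  simp only [derivative_sub, derivative_one, derivative_X_pow, C_eq_natCast]
  push_cast
  ring

-- recurrence
lemma recId (ν : ℕ) (hν : 1 ≤ ν) (k : ℕ) :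
    (1 - X^2) * derivative^[k+2] ((1 - X^2 : ℝ[X])^ν)
      + 2*((ν : ℝ[X]) - (k : ℝ[X]) - 1) * X * derivative^[k+1] ((1 - X^2 : ℝ[X])^ν)
      + ((k : ℝ[X]) + 1) * (2*(ν : ℝ[X]) - (k : ℝ[X])) * derivative^[k] ((1 - X^2 : ℝ[X])^ν)
      = 0 := by
  induction k with
  | zero =>
      have h := congrArg derivative (baseId ν hν)
      simp only [derivative_add, derivative_mul, derivative_sub, derivative_one,
        derivative_X_pow, derivative_X, derivative_natCast, derivative_zero,
        derivative_ofNat, C_eq_natCast] at h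
      simp only [Function.iterate_succ_apply', Function.iterate_zero_apply,
        Function.iterate_one]
      push_cast at h
      push_cast
      linear_combination h
  | succ k ih =>
      have h := congrArg derivative ih
      simp only [derivative_add, derivative_mul, derivative_sub, derivative_one,
        derivative_X_pow, derivative_X, derivative_natCast, derivative_zero,
        derivative_ofNat, C_eq_natCast] at h
      rw [show k+1+2 = (k+2)+1 by ring, show k+1+1 = (k+1)+1 by ring]
      simp only [Function.iterate_succ_apply'] at h ⊢
      push_cast
      push_cast at h
      linear_combination h

-- divisibility
lemma divId (ν : ℕ) : ∀ k, k ≤ ν → ∃ r : ℝ[X],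
    derivative^[k] ((1 - X^2 : ℝ[X])^ν) = (1 - X^2)^(ν-k) * r := by
  intro k
  induction k with
  | zero => intro _; exact ⟨1, by simp⟩
  | succ k ih =>
      intro hk
      obtain ⟨r, hr⟩ := ih (Nat.le_of_succ_le hk)
      set m := ν - (k+1) with hm
      have hmk : ν - k = m + 1 := by omega
      refine ⟨((m:ℝ[X])+1) * (-(2*X)) * r + (1 - X^2) * derivative r, ?_⟩
      rw [Function.iterate_succ_apply', hr, hmk, derivative_mul, derivative_pow]
      simp only [derivative_sub, derivative_one, derivative_X_pow, Nat.add_sub_cancel,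
        C_eq_natCast]
      rw [pow_succ]
      push_cast
      ring

/-- For each integer `ν ≥ 1`, `P_{ν−1}(x) = (1−x²)⁻¹ (d/dx)^{ν−1} (1−x²)^ν` is a
polynomial of degree `ν−1` and solves `(1−x²)P'' − 4xP' + (ν(ν+1) − 2)P = 0` on `(−1,1)`. -/
theorem stmt17 (ν : ℕ) (hν : 1 ≤ ν) :
    (∃ p : Polynomial ℝ, p.natDegree = ν - 1 ∧
      ∀ x ∈ Set.Ioo (-1 : ℝ) 1,
        p.eval x = (1 - x^2)⁻¹ * iteratedDeriv (ν - 1) (fun y : ℝ => (1 - y^2)^ν) x) ∧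
    ∀ x ∈ Set.Ioo (-1 : ℝ) 1,
      (1 - x^2) * deriv (deriv (fun y : ℝ =>
          (1 - y^2)⁻¹ * iteratedDeriv (ν - 1) (fun z : ℝ => (1 - z^2)^ν) y)) x
        - 4 * x * deriv (fun y : ℝ =>
          (1 - y^2)⁻¹ * iteratedDeriv (ν - 1) (fun z : ℝ => (1 - z^2)^ν) y) x
        + ((ν * (ν + 1) : ℝ) - 2) *
          ((1 - x^2)⁻¹ * iteratedDeriv (ν - 1) (fun z : ℝ => (1 - z^2)^ν) x) = 0 := by
  -- setup
  set q : ℝ[X] := (1 - X^2)^ν with hq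
  have hX2 : (1 - X^2 : ℝ[X]) ≠ 0 := fun h => by simpa using congrArg (eval 0) h
  have hdX2 : (1 - X^2 : ℝ[X]).natDegree = 2 := by
    have : (1 - X^2 : ℝ[X]) = -(X^2 - C 1) := by rw [C_1]; ring
    rw [this, natDegree_neg, natDegree_X_pow_sub_C]
  -- divisibility: get p
  obtain ⟨p, hp⟩ := divId ν (ν-1) (by omega)
  rw [show ν - (ν-1) = 1 by omega, pow_one] at hp
  -- degrees of iterated derivatives
  have hdeg : ∀ k, k ≤ 2*ν → (derivative^[k] q).natDegree = 2*ν - k := by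
    intro k
    induction k with
    | zero =>
        intro _
        simp only [Function.iterate_zero_apply, Nat.sub_zero, hq, natDegree_pow, hdX2]
        omega
    | succ k ih =>
        intro hk
        rw [Function.iterate_succ_apply', natDeg_deriv _ (by rw [ih (by omega)]; omega),
          ih (by omega)]
        omega
  have hdu : (derivative^[ν-1] q).natDegree = ν + 1 := by
    rw [hdeg (ν-1) (by omega)]; omega
  have hp0 : p ≠ 0 := by
    intro h; rw [h, mul_zero] at hp; rw [hp] at hdu; simp at hdu
  have hdp : p.natDegree = ν - 1 := by
    have := hdu
    rw [hp, natDegree_mul hX2 hp0, hdX2] at this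
    omega
  -- polynomial ODE
  have hE : (1 - X^2) * derivative (derivative p) - 4 * X * derivative p
      + ((ν:ℝ[X]) * ((ν:ℝ[X]) + 1) - 2) * p = 0 := by
    have hr := recId ν hν (ν-1)
    rw [show ν-1+2 = (ν-1+1)+1 by omega, show ν-1+1 = (ν-1)+1 from rfl] at hr
    rw [Function.iterate_succ_apply', Function.iterate_succ_apply', ← hq, hp] at hr
    have hcast : ((ν-1 : ℕ) : ℝ[X]) = (ν : ℝ[X]) - 1 := by
      push_cast [Nat.cast_sub hν]; ring
    rw [hcast] at hr
    have key : (1 - X^2) * ((1 - X^2) * derivative (derivative p) - 4 * X * derivative p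
        + ((ν:ℝ[X]) * ((ν:ℝ[X]) + 1) - 2) * p) = 0 := by
      simp only [derivative_add, derivative_mul, derivative_sub, derivative_one,
        derivative_X_pow, derivative_X, derivative_zero, derivative_natCast,
        derivative_ofNat, C_eq_natCast, pow_one, mul_one] at hr
      push_cast at hr ⊢
      linear_combination hr
    rcases mul_eq_zero.mp key with h | h
    · exact absurd h hX2
    · exact h
  -- iterated derivative of the polynomial function
  have hIter : ∀ k, iteratedDeriv k (fun y : ℝ => (1 - y^2)^ν)
      = fun x => (derivative^[k] q).eval x := by
    intro k
    induction k with
    | zero => funext x; simp [hq]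
    | succ k ih =>
        rw [iteratedDeriv_succ, ih]
        funext x
        rw [Function.iterate_succ_apply']
        exact Polynomial.deriv _
  set f : ℝ → ℝ := fun y => (1 - y^2)⁻¹ * iteratedDeriv (ν - 1) (fun z : ℝ => (1 - z^2)^ν) y
    with hf
  have hne : ∀ y ∈ Set.Ioo (-1:ℝ) 1, (1 - y^2) ≠ 0 := by
    rintro y ⟨h1, h2⟩; nlinarith
  have hfeq : ∀ y ∈ Set.Ioo (-1:ℝ) 1, f y = p.eval y := by
    intro y hy
    rw [hf]
    simp only [hIter]
    rw [hp]
    simp only [eval_mul, eval_sub, eval_one, eval_pow, eval_X]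
    rw [← mul_assoc, inv_mul_cancel₀ (hne y hy), one_mul]
  have hd1 : ∀ y ∈ Set.Ioo (-1:ℝ) 1, deriv f y = (derivative p).eval y := by
    intro y hy
    have hev : f =ᶠ[nhds y] fun t => p.eval t :=
      Filter.eventuallyEq_of_mem (isOpen_Ioo.mem_nhds hy) hfeq
    rw [hev.deriv_eq]
    exact Polynomial.deriv _
  have hd2 : ∀ y ∈ Set.Ioo (-1:ℝ) 1, deriv (deriv f) y
      = (derivative (derivative p)).eval y := by
    intro y hy
    have hev : deriv f =ᶠ[nhds y] fun t => (derivative p).eval t :=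
      Filter.eventuallyEq_of_mem (isOpen_Ioo.mem_nhds hy) hd1
    rw [hev.deriv_eq]
    exact Polynomial.deriv _
  constructor
  · exact ⟨p, hdp, fun x hx => (hfeq x hx).symm⟩
  · intro x hx
    have := congrArg (eval x) hE
    simp only [eval_add, eval_sub, eval_mul, eval_pow, eval_one, eval_X, eval_natCast,
      eval_ofNat, eval_zero] at this
    rw [hd2 x hx, hd1 x hx]
    have hfx : (1 - x^2)⁻¹ * iteratedDeriv (ν - 1) (fun z : ℝ => (1 - z^2)^ν) x = p.eval x :=
      hfeq x hx
    rw [hfx]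
    linear_combination this
end

section
/- Let γ ∈ ℝ and let v : ℝ³ \ {0} → ℝ³ be a smooth compactly supported vector field with v(0) = 0 (limit sense), and set u(x) = |x|^{−γ−1/2} v(x). Then ∫_{ℝ³} |∇u|² |x|^{2γ} dx = ∫_{ℝ³} |∇v|² |x|^{−1} dx + (γ + 1/2)² ∫_{ℝ³} |v|² |x|^{−3} dx, provided both sides are finite. -/
open MeasureTheory Set Metric Filter
open scoped Topology ENNReal NNReal RealInnerProductSpace

noncomputable section

local notation "E3" => EuclideanSpace ℝ (Fin 3)

variable {F : Type*} [NormedAddCommGroup F] [InnerProductSpace ℝ F]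

lemma bvz_hasFDerivAt_norm_rpow (α : ℝ) {x : F} (hx : x ≠ 0) :
    HasFDerivAt (fun y : F => ‖y‖ ^ (α : ℝ))
      ((α * ‖x‖ ^ (α - 2 : ℝ)) • (innerSL ℝ x : F →L[ℝ] ℝ)) x := by
  have hx2 : (0:ℝ) < ⟪x, x⟫ := by
    rw [real_inner_self_eq_norm_sq]; exact pow_pos (norm_pos_iff.2 hx) 2
  have h1 : HasFDerivAt (fun y : F => ⟪y, y⟫) ((2:ℝ) • (innerSL ℝ x : F →L[ℝ] ℝ)) x := by
    have h := (hasFDerivAt_id x).inner ℝ (hasFDerivAt_id x)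
    refine h.congr_fderiv ?_
    ext h'
    simp [fderivInnerCLM_apply, real_inner_comm, two_mul]
  have h2 : HasDerivAt (fun t : ℝ => t ^ (α/2 : ℝ)) ((α/2) * ⟪x, x⟫ ^ (α/2 - 1 : ℝ)) ⟪x, x⟫ :=
    Real.hasDerivAt_rpow_const (Or.inl hx2.ne')
  have h3 := HasDerivAt.comp_hasFDerivAt_of_eq (f := fun y : F => (⟪y, y⟫ : ℝ)) x h2 h1 rfl
  have hnorm : ∀ y : F, ⟪y, y⟫ ^ (α/2 : ℝ) = ‖y‖ ^ (α : ℝ) := by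
    intro y
    rw [real_inner_self_eq_norm_sq, ← Real.rpow_natCast (‖y‖) 2, ← Real.rpow_mul (norm_nonneg y)]
    congr 1; push_cast; ring
  have hc : ⟪x, x⟫ ^ (α/2 - 1 : ℝ) = ‖x‖ ^ (α - 2 : ℝ) := by
    rw [real_inner_self_eq_norm_sq, ← Real.rpow_natCast (‖x‖) 2, ← Real.rpow_mul (norm_nonneg x)]
    congr 1; push_cast; ring
  rw [show (fun y : F => ‖y‖ ^ (α : ℝ)) = (fun t : ℝ => t ^ (α/2 : ℝ)) ∘ (fun y : F => (⟪y, y⟫ : ℝ)) from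
    funext fun y => (hnorm y).symm]
  refine h3.congr_fderiv ?_
  · rw [hc, smul_smul]; ring_nf


lemma bvz_sum_single (x : E3) :
    (∑ i : Fin 3, x i • EuclideanSpace.single i (1:ℝ)) = x := by
  ext j
  rw [WithLp.ofLp_sum, Finset.sum_apply]
  simp [EuclideanSpace.single_apply]

lemma bvz_pointwise (γ : ℝ) (v u : E3 → E3) (hv : ContDiffOn ℝ (⊤ : ℕ∞) v {(0:E3)}ᶜ)
    (hu : ∀ x, u x = ‖x‖ ^ (-γ - 1/2 : ℝ) • v x) {x : E3} (hx : x ≠ 0) :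
    (∑ i : Fin 3, ‖fderiv ℝ u x (EuclideanSpace.single i 1)‖^2) * ‖x‖ ^ (2*γ) =
      (∑ i : Fin 3, ‖fderiv ℝ v x (EuclideanSpace.single i 1)‖^2) * ‖x‖ ^ (-1:ℝ)
      + (2*(-γ-1/2)) * (⟪v x, fderiv ℝ v x x⟫ * ‖x‖ ^ (-3:ℝ))
      + (-γ-1/2)^2 * (‖v x‖^2 * ‖x‖ ^ (-3:ℝ)) := by
  have hr : (0:ℝ) < ‖x‖ := norm_pos_iff.2 hx
  set A : ℝ := -γ - 1/2 with hA
  have hvd : DifferentiableAt ℝ v x :=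
    (hv.contDiffAt (isOpen_compl_singleton.mem_nhds hx)).differentiableAt (by simp)
  set D := fderiv ℝ v x with hD
  have hud : HasFDerivAt u (‖x‖ ^ (A:ℝ) • D
      + ((A * ‖x‖ ^ (A-2:ℝ)) • (innerSL ℝ x)).smulRight (v x)) x := by
    have h := (bvz_hasFDerivAt_norm_rpow A hx).smul hvd.hasFDerivAt
    have he : (fun y : E3 => ‖y‖ ^ (A:ℝ) • v y) = u := funext fun y => (hu y).symm
    rw [← hD] at h
    change HasFDerivAt (fun y : E3 => ‖y‖ ^ (A:ℝ) • v y) _ x at h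
    rwa [he] at h
  have happ : ∀ i : Fin 3, fderiv ℝ u x (EuclideanSpace.single i 1)
      = ‖x‖ ^ (A:ℝ) • D (EuclideanSpace.single i 1) + (A * ‖x‖ ^ (A-2:ℝ) * x i) • v x := by
    intro i
    rw [hud.fderiv]
    simp only [ContinuousLinearMap.add_apply, ContinuousLinearMap.smul_apply,
      ContinuousLinearMap.smulRight_apply, innerSL_apply_apply]
    rw [EuclideanSpace.inner_single_right]
    norm_num [smul_smul]
  have hsq : ∀ i : Fin 3, ‖fderiv ℝ u x (EuclideanSpace.single i 1)‖^2
      = (‖x‖^(A:ℝ) * ‖x‖^(A:ℝ)) * ‖D (EuclideanSpace.single i 1)‖^2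
        + (2*A*(‖x‖^(A:ℝ) * ‖x‖^(A-2:ℝ))) * (x i * ⟪D (EuclideanSpace.single i 1), v x⟫)
        + (A^2*(‖x‖^(A-2:ℝ) * ‖x‖^(A-2:ℝ))*‖v x‖^2) * (x i * x i) := by
    intro i
    rw [happ i, norm_add_sq_real, norm_smul, norm_smul, real_inner_smul_left,
      real_inner_smul_right]
    simp only [Real.norm_eq_abs, norm_norm, mul_pow, sq_abs]
    ring
  have hDx : D x = ∑ i : Fin 3, x i • D (EuclideanSpace.single i 1) := by
    conv_lhs => rw [← bvz_sum_single x]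
    rw [map_sum]
    simp
  have hinner : ⟪v x, D x⟫ = ∑ i : Fin 3, x i * ⟪D (EuclideanSpace.single i 1), v x⟫ := by
    rw [hDx, inner_sum]
    exact Finset.sum_congr rfl fun i _ => by
      rw [real_inner_smul_right, real_inner_comm]
  have hsum2 : ∑ i : Fin 3, x i * x i = ‖x‖ * ‖x‖ := by
    have h1 : (⟪x, x⟫ : ℝ) = ∑ i : Fin 3, x i * x i := by
      rw [PiLp.inner_apply]; exact Finset.sum_congr rfl fun i _ => by simp [RCLike.inner_apply, mul_comm]; ring
    rw [← h1, real_inner_self_eq_norm_mul_norm]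
  have f1 : ‖x‖^(A:ℝ) * ‖x‖^(A:ℝ) * ‖x‖^(2*γ) = ‖x‖^(-1:ℝ) := by
    rw [← Real.rpow_add hr, ← Real.rpow_add hr]
    congr 1; rw [hA]; ring
  have f2 : ‖x‖^(A:ℝ) * ‖x‖^(A-2:ℝ) * ‖x‖^(2*γ) = ‖x‖^(-3:ℝ) := by
    rw [← Real.rpow_add hr, ← Real.rpow_add hr]
    congr 1; rw [hA]; ring
  have hrr : ‖x‖ * ‖x‖ = ‖x‖ ^ ((2:ℕ):ℝ) := by rw [Real.rpow_natCast]; ring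
  have f3 : ‖x‖^(A-2:ℝ) * ‖x‖^(A-2:ℝ) * (‖x‖ * ‖x‖) * ‖x‖^(2*γ) = ‖x‖^(-3:ℝ) := by
    rw [hrr, ← Real.rpow_add hr, ← Real.rpow_add hr, ← Real.rpow_add hr]
    congr 1; rw [hA]; push_cast; ring
  rw [Finset.sum_congr rfl fun i _ => hsq i]
  rw [Finset.sum_add_distrib, Finset.sum_add_distrib, ← Finset.mul_sum, ← Finset.mul_sum,
    ← Finset.mul_sum, ← hinner, hsum2]
  linear_combination (∑ i : Fin 3, ‖D (EuclideanSpace.single i 1)‖^2) * f1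
    + 2*A*(⟪v x, D x⟫ : ℝ)*f2 + A^2*‖v x‖^2*f3

lemma bvz_radial (v : E3 → E3) (hv : ContDiffOn ℝ (⊤ : ℕ∞) v {(0:E3)}ᶜ)
    {R : ℝ} (hvR : ∀ y : E3, R < ‖y‖ → v y = 0)
    (hv0 : Filter.Tendsto v (𝓝[{(0:E3)}ᶜ] 0) (𝓝 0))
    (σ : sphere (0:E3) 1)
    (hσ : Integrable (fun ρ : Ioi (0:ℝ) =>
        (⟪v ((ρ:ℝ) • (σ:E3)), fderiv ℝ v ((ρ:ℝ) • (σ:E3)) ((ρ:ℝ) • (σ:E3))⟫ : ℝ)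
          * ‖(ρ:ℝ) • (σ:E3)‖ ^ (-3:ℝ)) (Measure.volumeIoiPow 2)) :
    ∫ ρ : Ioi (0:ℝ), (⟪v ((ρ:ℝ) • (σ:E3)), fderiv ℝ v ((ρ:ℝ) • (σ:E3)) ((ρ:ℝ) • (σ:E3))⟫ : ℝ)
        * ‖(ρ:ℝ) • (σ:E3)‖ ^ (-3:ℝ) ∂(Measure.volumeIoiPow 2) = 0 := by
  set K : E3 → ℝ := fun x => (⟪v x, fderiv ℝ v x x⟫ : ℝ) * ‖x‖ ^ (-3:ℝ) with hKdef
  set ψ : ℝ → ℝ := fun ρ => (⟪v (ρ • (σ:E3)), fderiv ℝ v (ρ • (σ:E3)) (σ:E3)⟫ : ℝ) with hψdef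
  have hσ0 : (σ:E3) ≠ 0 := ne_zero_of_mem_unit_sphere σ
  have hσn : ‖(σ:E3)‖ = 1 := mem_sphere_zero_iff_norm.1 σ.2
  have hmeas : Measurable fun r : Ioi (0:ℝ) => ((r:ℝ) ^ 2).toNNReal :=
    (measurable_subtype_coe.pow_const _).real_toNNReal
  -- pointwise: weight • K (ρ•σ) = ψ ρ  on Ioi 0
  have heq : ∀ ρ ∈ Ioi (0:ℝ), (ρ ^ 2).toNNReal • K (ρ • (σ:E3)) = ψ ρ := by
    intro ρ hρ
    have hρ0 : (0:ℝ) < ρ := hρ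
    have hnρ : ‖ρ • (σ:E3)‖ = ρ := by
      rw [norm_smul, hσn, Real.norm_eq_abs, abs_of_pos hρ0, mul_one]
    have hx0 : ρ • (σ:E3) ≠ 0 := smul_ne_zero hρ0.ne' hσ0
    have hmap : fderiv ℝ v (ρ • (σ:E3)) (ρ • (σ:E3)) = ρ • fderiv ℝ v (ρ • (σ:E3)) (σ:E3) :=
      (fderiv ℝ v (ρ • (σ:E3))).map_smul ρ (σ:E3)
    have hr3 : (ρ:ℝ) ^ (-3:ℝ) = (ρ^3)⁻¹ := by
      rw [show ((-3:ℝ)) = ((-3 : ℤ):ℝ) by norm_num, Real.rpow_intCast, zpow_neg]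
      norm_cast
    simp only [hKdef, hψdef, hnρ, hmap, real_inner_smul_right, NNReal.smul_def,
      Real.coe_toNNReal _ (sq_nonneg ρ), smul_eq_mul, hr3]
    field_simp
  -- differentiability of φ
  have hφd : ∀ ρ : ℝ, 0 < ρ →
      HasDerivAt (fun ρ : ℝ => (⟪v (ρ • (σ:E3)), v (ρ • (σ:E3))⟫ : ℝ)) (2 * ψ ρ) ρ := by
    intro ρ hρ0
    have hx0 : ρ • (σ:E3) ≠ 0 := smul_ne_zero hρ0.ne' hσ0
    have hvd : DifferentiableAt ℝ v (ρ • (σ:E3)) :=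
      (hv.contDiffAt (isOpen_compl_singleton.mem_nhds hx0)).differentiableAt (by simp)
    have hc : HasDerivAt (fun t : ℝ => t • (σ:E3)) (σ:E3) ρ := by
      simpa using (hasDerivAt_id ρ).smul_const (σ:E3)
    have hcv : HasDerivAt (fun t : ℝ => v (t • (σ:E3)))
        (fderiv ℝ v (ρ • (σ:E3)) (σ:E3)) ρ := hvd.hasFDerivAt.comp_hasDerivAt ρ hc
    have h := hcv.inner ℝ hcv
    refine h.congr_deriv ?_
    rw [hψdef]
    simp only []
    rw [real_inner_comm (fderiv ℝ v (ρ • (σ:E3)) (σ:E3)) (v (ρ • (σ:E3)))]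
    ring
  -- support bound
  set φ : ℝ → ℝ := fun ρ => (⟪v (ρ • (σ:E3)), v (ρ • (σ:E3))⟫ : ℝ) with hφdef
  have hφR : ∀ ρ : ℝ, R < ρ → φ ρ = 0 := by
    intro ρ hρ
    have : v (ρ • (σ:E3)) = 0 := by
      apply hvR
      rw [norm_smul, hσn, mul_one, Real.norm_eq_abs]
      exact lt_of_lt_of_le hρ (le_abs_self ρ)
    simp [hφdef, this]
  have hφtop : Tendsto φ atTop (𝓝 0) := by
    refine Tendsto.congr' ?_ tendsto_const_nhds
    filter_upwards [eventually_gt_atTop R] with ρ hρ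
    exact (hφR ρ hρ).symm
  have hφ0 : Tendsto φ (𝓝[>] (0:ℝ)) (𝓝 0) := by
    have hmap : Tendsto (fun ρ : ℝ => ρ • (σ:E3)) (𝓝[>] (0:ℝ)) (𝓝[{(0:E3)}ᶜ] 0) := by
      rw [tendsto_nhdsWithin_iff]
      constructor
      · have hc : Continuous (fun ρ : ℝ => ρ • (σ:E3)) := by fun_prop
        have := hc.tendsto (0:ℝ)
        rw [zero_smul] at this
        exact this.mono_left nhdsWithin_le_nhds
      · filter_upwards [self_mem_nhdsWithin] with ρ hρ
        exact smul_ne_zero (ne_of_gt hρ) hσ0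
    have hvv : Tendsto (fun ρ : ℝ => v (ρ • (σ:E3))) (𝓝[>] (0:ℝ)) (𝓝 0) := hv0.comp hmap
    have h2 : Tendsto (fun ρ : ℝ => (⟪v (ρ • (σ:E3)), v (ρ • (σ:E3))⟫ : ℝ)) (𝓝[>] (0:ℝ))
        (𝓝 (⟪(0:E3), (0:E3)⟫ : ℝ)) := hvv.inner hvv
    simpa [hφdef] using h2
  -- transfer integrability
  simp only [Measure.volumeIoiPow, ENNReal.ofReal] at hσ ⊢
  rw [integral_withDensity_eq_integral_smul hmeas,
    integral_subtype_comap measurableSet_Ioi (fun ρ : ℝ => ((ρ ^ 2).toNNReal : ℝ≥0) • K (ρ • (σ:E3)))]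
  rw [integrable_withDensity_iff_integrable_smul hmeas] at hσ
  have hIO : IntegrableOn (fun ρ : ℝ => ((ρ ^ 2).toNNReal : ℝ≥0) • K (ρ • (σ:E3))) (Ioi 0) := by
    rw [IntegrableOn, ← map_comap_subtype_coe measurableSet_Ioi,
      (MeasurableEmbedding.subtype_coe measurableSet_Ioi).integrable_map_iff]
    exact hσ
  have hψint : IntegrableOn ψ (Ioi (0:ℝ)) := hIO.congr_fun heq measurableSet_Ioi
  rw [setIntegral_congr_fun measurableSet_Ioi heq]
  -- FTC on (ε, ∞)
  have hIoi : ∀ ε : ℝ, 0 < ε → ∫ ρ in Ioi ε, 2 * ψ ρ = - φ ε := by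
    intro ε hε
    have h := integral_Ioi_of_hasDerivAt_of_tendsto'
      (f := φ) (f' := fun ρ => 2 * ψ ρ) (a := ε) (m := 0)
      (fun ρ hρ => hφd ρ (lt_of_lt_of_le hε hρ))
      ((hψint.mono_set (Ioi_subset_Ioi hε.le)).const_mul 2) hφtop
    rw [h, zero_sub]
  -- limit along εₙ = 1/(n+1)
  set s : ℕ → Set ℝ := fun n => Ioi (((n:ℝ)+1)⁻¹) with hsdef
  have hmono : Monotone s := by
    intro n m hnm
    apply Ioi_subset_Ioi
    gcongr
  have hunion : ⋃ n, s n = Ioi (0:ℝ) := by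
    ext t
    simp only [hsdef, mem_iUnion, mem_Ioi]
    constructor
    · rintro ⟨n, hn⟩
      exact lt_trans (by positivity) hn
    · intro ht
      obtain ⟨n, hn⟩ := exists_nat_one_div_lt ht
      exact ⟨n, by rw [one_div] at hn; exact_mod_cast hn⟩
  have h2ψ : IntegrableOn (fun ρ => 2 * ψ ρ) (⋃ n, s n) := by
    rw [hunion]; exact hψint.const_mul 2
  have htend := tendsto_setIntegral_of_monotone (fun n => measurableSet_Ioi) hmono h2ψ
  have heval : ∀ n : ℕ, ∫ ρ in s n, 2 * ψ ρ = - φ (((n:ℝ)+1)⁻¹) :=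
    fun n => hIoi _ (by positivity)
  have hlim2 : Tendsto (fun n : ℕ => ∫ ρ in s n, 2 * ψ ρ) atTop (𝓝 0) := by
    simp only [heval]
    rw [show (0:ℝ) = -0 by ring]
    apply Tendsto.neg
    apply hφ0.comp
    rw [tendsto_nhdsWithin_iff]
    constructor
    · have := tendsto_one_div_add_atTop_nhds_zero_nat (𝕜 := ℝ); simp only [one_div] at this; exact this
    · exact Eventually.of_forall fun n => mem_Ioi.2 (by positivity)
  have hfinal : ∫ ρ in ⋃ n, s n, 2 * ψ ρ = 0 := tendsto_nhds_unique htend hlim2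
  rw [hunion] at hfinal
  rw [integral_const_mul] at hfinal
  linarith [hfinal]

lemma bvz_cross_zero (v : E3 → E3) (hv : ContDiffOn ℝ (⊤ : ℕ∞) v {(0:E3)}ᶜ)
    (hsupp : HasCompactSupport v)
    (hv0 : Filter.Tendsto v (𝓝[{(0:E3)}ᶜ] 0) (𝓝 0))
    (hK : IntegrableOn (fun x : E3 => (⟪v x, fderiv ℝ v x x⟫ : ℝ) * ‖x‖ ^ (-3:ℝ)) {(0:E3)}ᶜ) :
    ∫ x in {(0:E3)}ᶜ, (⟪v x, fderiv ℝ v x x⟫ : ℝ) * ‖x‖ ^ (-3:ℝ) = 0 := by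
  set K : E3 → ℝ := fun x => (⟪v x, fderiv ℝ v x x⟫ : ℝ) * ‖x‖ ^ (-3:ℝ) with hKdef
  have h0 : MeasurableSet ({(0:E3)}ᶜ) := (measurableSet_singleton 0).compl
  -- support radius
  obtain ⟨R, hR⟩ := (isBounded_iff_subset_closedBall 0).1 hsupp.isBounded
  have hvR : ∀ y : E3, R < ‖y‖ → v y = 0 := by
    intro y hy
    apply image_eq_zero_of_notMem_tsupport
    intro hmem
    have := hR hmem
    rw [mem_closedBall, dist_zero_right] at this
    linarith
  -- polar coordinates
  have hmp := Measure.measurePreserving_homeomorphUnitSphereProd (volume : Measure E3)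
  simp only [finrank_euclideanSpace, Fintype.card_fin] at hmp
  set ν := ((volume : Measure E3).toSphere).prod (Measure.volumeIoiPow 2) with hνdef
  set g : sphere (0:E3) 1 × Ioi (0:ℝ) → ℝ := fun p => K ((p.2 : ℝ) • (p.1 : E3)) with hgdef
  have hcomp : ∀ z : ({(0:E3)}ᶜ : Set E3), g (homeomorphUnitSphereProd _ z) = K z := by
    intro z
    have hz : (z : E3) ≠ 0 := z.2
    simp only [hgdef, homeomorphUnitSphereProd_apply_snd_coe,
      homeomorphUnitSphereProd_apply_fst_coe]
    rw [smul_inv_smul₀ (norm_ne_zero_iff.2 hz)]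
  have e1 : ∫ x in {(0:E3)}ᶜ, K x
      = ∫ z : ({(0:E3)}ᶜ : Set E3), K z ∂((volume : Measure E3).comap Subtype.val) :=
    (integral_subtype_comap h0 K).symm
  have e2 : ∫ z : ({(0:E3)}ᶜ : Set E3), K z ∂((volume : Measure E3).comap Subtype.val)
      = ∫ p, g p ∂ν := by
    rw [show (fun z : ({(0:E3)}ᶜ : Set E3) => K z)
        = fun z => g (homeomorphUnitSphereProd _ z) from funext fun z => (hcomp z).symm]
    exact hmp.integral_comp (Homeomorph.measurableEmbedding _) g
  -- integrability of g
  have hKsub : Integrable (fun z : ({(0:E3)}ᶜ : Set E3) => K z)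
      ((volume : Measure E3).comap Subtype.val) := by
    have h' : Integrable K ((volume : Measure E3).restrict {(0:E3)}ᶜ) := hK
    rw [← map_comap_subtype_coe h0] at h'
    exact ((MeasurableEmbedding.subtype_coe h0).integrable_map_iff).1 h'
  have hg : Integrable g ν := by
    have h1 : Integrable (fun z : ({(0:E3)}ᶜ : Set E3) => g (homeomorphUnitSphereProd _ z))
        ((volume : Measure E3).comap Subtype.val) := by
      rw [show (fun z : ({(0:E3)}ᶜ : Set E3) => g (homeomorphUnitSphereProd _ z))
          = fun z : ({(0:E3)}ᶜ : Set E3) => K (z : E3) from funext fun z => hcomp z]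
      exact hKsub
    have h2 : Integrable g (Measure.map (homeomorphUnitSphereProd _)
        ((volume : Measure E3).comap Subtype.val)) :=
      ((Homeomorph.measurableEmbedding _).integrable_map_iff).2 h1
    rwa [hmp.map_eq] at h2
  have e3 := integral_prod g hg
  -- inner integrals vanish a.e.
  have hzero : ∀ᵐ σ ∂((volume : Measure E3).toSphere),
      (∫ ρ : Ioi (0:ℝ), g (σ, ρ) ∂(Measure.volumeIoiPow 2)) = 0 := by
    filter_upwards [hg.prod_right_ae] with σ hσ
    exact bvz_radial v hv hvR hv0 σ hσ
  rw [e1, e2, e3, integral_congr_ae hzero, integral_zero]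

open scoped Topology in
/-- Brezis–Vázquez–Maz'ya transformation identity: if `v` is a smooth compactly
supported vector field on `ℝ³ \ {0}` with `v → 0` at the origin and
`u(x) = |x|^{−γ−1/2} v(x)`, then
`∫ |∇u|² |x|^{2γ} dx = ∫ |∇v|² |x|^{−1} dx + (γ+1/2)² ∫ |v|² |x|^{−3} dx`,
provided both sides are finite. Here `|∇w|²` is the Frobenius norm
`∑ i, ‖∂w/∂xᵢ‖²`. -/
theorem stmt18 (γ : ℝ)
    (v u : EuclideanSpace ℝ (Fin 3) → EuclideanSpace ℝ (Fin 3))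
    (hv : ContDiffOn ℝ (⊤ : ℕ∞) v {(0 : EuclideanSpace ℝ (Fin 3))}ᶜ)
    (hsupp : HasCompactSupport v)
    (hv0 : Filter.Tendsto v (𝓝[{(0 : EuclideanSpace ℝ (Fin 3))}ᶜ] 0) (𝓝 0))
    (hu : ∀ x, u x = ‖x‖ ^ (-γ - 1/2 : ℝ) • v x)
    (hint_u : MeasureTheory.IntegrableOn
      (fun x => (∑ i : Fin 3, ‖fderiv ℝ u x (EuclideanSpace.single i 1)‖^2) * ‖x‖ ^ (2*γ))
      {(0 : EuclideanSpace ℝ (Fin 3))}ᶜ)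
    (hint_v : MeasureTheory.IntegrableOn
      (fun x => (∑ i : Fin 3, ‖fderiv ℝ v x (EuclideanSpace.single i 1)‖^2) * ‖x‖ ^ (-1 : ℝ))
      {(0 : EuclideanSpace ℝ (Fin 3))}ᶜ)
    (hint_v' : MeasureTheory.IntegrableOn
      (fun x => ‖v x‖^2 * ‖x‖ ^ (-3 : ℝ))
      {(0 : EuclideanSpace ℝ (Fin 3))}ᶜ) :
    ∫ x in {(0 : EuclideanSpace ℝ (Fin 3))}ᶜ,
        (∑ i : Fin 3, ‖fderiv ℝ u x (EuclideanSpace.single i 1)‖^2) * ‖x‖ ^ (2*γ) =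
      (∫ x in {(0 : EuclideanSpace ℝ (Fin 3))}ᶜ,
        (∑ i : Fin 3, ‖fderiv ℝ v x (EuclideanSpace.single i 1)‖^2) * ‖x‖ ^ (-1 : ℝ)) +
      (γ + 1/2)^2 * ∫ x in {(0 : EuclideanSpace ℝ (Fin 3))}ᶜ,
        ‖v x‖^2 * ‖x‖ ^ (-3 : ℝ) := by
  have h0 : MeasurableSet ({(0:E3)}ᶜ) := (measurableSet_singleton 0).compl
  set K : E3 → ℝ := fun x => (⟪v x, fderiv ℝ v x x⟫ : ℝ) * ‖x‖ ^ (-3:ℝ) with hKdef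
  have hpt : ∀ x ∈ ({(0:E3)}ᶜ : Set E3),
      (∑ i : Fin 3, ‖fderiv ℝ u x (EuclideanSpace.single i 1)‖^2) * ‖x‖ ^ (2*γ)
      = ((∑ i : Fin 3, ‖fderiv ℝ v x (EuclideanSpace.single i 1)‖^2) * ‖x‖ ^ (-1:ℝ)
          + (2*(-γ-1/2)) * K x)
        + (-γ-1/2)^2 * (‖v x‖^2 * ‖x‖ ^ (-3:ℝ)) := by
    intro x hx
    have := bvz_pointwise γ v u hv hu (mem_compl_singleton_iff.1 hx)
    exact this
  have hcross : IntegrableOn (fun x : E3 => (2*(-γ-1/2)) * K x) {(0:E3)}ᶜ := by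
    have hsum : IntegrableOn (fun x : E3 =>
        (∑ i : Fin 3, ‖fderiv ℝ u x (EuclideanSpace.single i 1)‖^2) * ‖x‖ ^ (2*γ)
        - ((∑ i : Fin 3, ‖fderiv ℝ v x (EuclideanSpace.single i 1)‖^2) * ‖x‖ ^ (-1:ℝ)
          + (-γ-1/2)^2 * (‖v x‖^2 * ‖x‖ ^ (-3:ℝ)))) {(0:E3)}ᶜ :=
      hint_u.sub (hint_v.add (hint_v'.const_mul _))
    refine hsum.congr_fun (fun x hx => ?_) h0
    beta_reduce; rw [hpt x hx]; ring
  rw [setIntegral_congr_fun h0 hpt]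
  have hI1 : IntegrableOn (fun x : E3 =>
      (∑ i : Fin 3, ‖fderiv ℝ v x (EuclideanSpace.single i 1)‖^2) * ‖x‖ ^ (-1:ℝ)
      + (2*(-γ-1/2)) * K x) {(0:E3)}ᶜ := hint_v.add hcross
  have hI2 : IntegrableOn (fun x : E3 =>
      ((-γ-1/2:ℝ))^2 * (‖v x‖^2 * ‖x‖ ^ (-3:ℝ))) {(0:E3)}ᶜ := hint_v'.const_mul _
  rw [integral_add hI1 hI2, integral_add hint_v hcross]
  have hzero : ∫ x in {(0:E3)}ᶜ, (2*(-γ-1/2)) * K x = 0 := by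
    rw [integral_const_mul]
    by_cases hA0 : (2*(-γ-1/2) : ℝ) = 0
    · rw [hA0, zero_mul]
    · have hKint : IntegrableOn K {(0:E3)}ᶜ := by
        refine IntegrableOn.congr_fun (hcross.const_mul (2*(-γ-1/2))⁻¹) (fun x hx => ?_) h0
        rw [← mul_assoc, inv_mul_cancel₀ hA0, one_mul]
      rw [bvz_cross_zero v hv hsupp hv0 hKint, mul_zero]
  rw [hzero, integral_const_mul]
  have : ((-γ-1/2:ℝ))^2 = (γ+1/2)^2 := by ring
  rw [this]; ring
end
end
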